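/- Let φ : A → B be an involutive n-homomorphism of C*-algebras with n ≥ 2 even. Then φ is a *-homomorphism: φ(ab) = φ(a)φ(b) for all a, b ∈ A. -/

import Mathlib

/-!
For `a ≥ 0` take `b = a ^ (1/n)`; then `φ a = φ b ^ n = (φ b ^ (n/2))⋆ φ b ^ (n/2) ≥ 0`, so `φ` is a
positive map and hence bounded. Since `φ (e ^ (k(n-1)+1)) = φ e ^ (k(n-1)+1)` stays bounded, a
positive contraction `e` has `0 ≤ φ e ≤ 1`.

Let `e` run through an increasing approximate unit of `A` and compute in the unitization of `B`.
Continuity gives `φ a (φ e) ^ (n-1) = φ (a e ^ (n-1)) → φ a` and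
`φ a (φ e) ^ (n-2) φ b = φ (a e ^ (n-2) b) → φ (a b)`. For `0 ≤ p ≤ 1` and `k ≤ m` one has
`(1 - p ^ k) ^ 2 ≤ 1 - p ^ m`, whence `‖x - x p ^ k‖ ^ 2 ≤ ‖x‖ ‖x - x p ^ m‖`; so also
`φ a (φ e) ^ (n-2) → φ a`, and `φ (a b) = φ a φ b` in the limit.
-/

/-- Product of a nonempty list: `nuProd x [a₁, …, aₘ] = x * a₁ * ⋯ * aₘ`. -/
def nuProd {α : Type*} [Mul α] (x : α) (l : List α) : α := l.foldl (· * ·) x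

open Filter Topology
open scoped NNReal

section NuProd

variable {α β : Type*}

lemma nuProd_append [Mul α] (x : α) (l₁ l₂ : List α) :
    nuProd x (l₁ ++ l₂) = nuProd (nuProd x l₁) l₂ :=
  List.foldl_append ..

lemma nuProd_concat [Mul α] (x y : α) (l : List α) : nuProd x (l ++ [y]) = nuProd x l * y :=
  nuProd_append x l [y]

lemma nuProd_replicate_succ [Mul α] (x y : α) (m : ℕ) :
    nuProd x (List.replicate (m + 1) y) = nuProd x (List.replicate m y) * y := by
  rw [List.replicate_succ', nuProd_concat]

lemma nuProd_eq_mul_prod [Monoid α] (x : α) (l : List α) : nuProd x l = x * l.prod := by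
  induction l generalizing x with
  | nil => exact (mul_one x).symm
  | cons y l ih => rw [List.prod_cons, ← mul_assoc, ← ih]; rfl

lemma map_nuProd [Mul α] [Mul β] {F : Type*} [FunLike F α β] [MulHomClass F α β] (f : F)
    (x : α) (l : List α) : f (nuProd x l) = nuProd (f x) (l.map f) := by
  induction l generalizing x with
  | nil => rfl
  | cons y l ih => simpa [nuProd] using ih (x * y)

lemma map_nuProd_of_length_eq [Mul α] [Mul β] {m : ℕ} {f : α → β}
    (hf : ∀ (x : α) (g : Fin m → α),
      f (nuProd x (List.ofFn g)) = nuProd (f x) (List.ofFn fun i => f (g i)))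
    (x : α) {l : List α} (hl : l.length = m) : f (nuProd x l) = nuProd (f x) (l.map f) := by
  subst hl
  simpa [List.map_ofFn] using hf x l.get

lemma norm_nuProd_replicate_le [NonUnitalSeminormedRing α] (x y : α) (m : ℕ) :
    ‖nuProd x (List.replicate m y)‖ ≤ ‖x‖ * ‖y‖ ^ m := by
  induction m with
  | zero => simp [nuProd]
  | succ m ih =>
    rw [nuProd_replicate_succ, pow_succ, ← mul_assoc]
    exact (norm_mul_le _ _).trans (by gcongr)

lemma Unitization.inr_nuProd {R A : Type*} [CommSemiring R] [NonUnitalSemiring A] [Module R A]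
    [IsScalarTower R A A] [SMulCommClass R A A] (x : A) (l : List A) :
    ((nuProd x l : A) : Unitization R A) = x * (l.map (↑)).prod := by
  rw [← nuProd_eq_mul_prod]
  exact map_nuProd (Unitization.inrNonUnitalAlgHom R A) x l

end NuProd

namespace CStarAlgebra

section Unital

variable {C : Type*} [CStarAlgebra C] [PartialOrder C] [StarOrderedRing C]

lemma norm_pow_of_nonneg {p : C} (hp : 0 ≤ p) {m : ℕ} (hm : m ≠ 0) : ‖p ^ m‖ = ‖p‖ ^ m := by
  rw [← CFC.rpow_natCast p m, CFC.norm_rpow p (by positivity), Real.rpow_natCast]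

lemma norm_sub_mul_pow_sq_le {p : C} (hp₀ : 0 ≤ p) (hp₁ : p ≤ 1) (x : C) {k m : ℕ}
    (hkm : k ≤ m) : ‖x - x * p ^ k‖ ^ 2 ≤ ‖x‖ * ‖x - x * p ^ m‖ := by
  set d := 1 - p ^ k
  have hpk : p ^ k ≤ 1 := by simpa using pow_antitone hp₀ hp₁ k.zero_le
  have hd₀ : 0 ≤ d := sub_nonneg.2 hpk
  have hd₁ : d ≤ 1 := sub_le_self 1 (pow_nonneg hp₀ k)
  have hdd : d * d ≤ 1 - p ^ m :=
    calc d * d ≤ d := by simpa [sq] using pow_antitone hd₀ hd₁ one_le_two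
      _ ≤ 1 - p ^ m := sub_le_sub_left (pow_antitone hp₀ hp₁ hkm) 1
  have hd_sa : star d = d := (IsSelfAdjoint.of_nonneg hd₀).star_eq
  have hdd₀ : 0 ≤ d * d := by simpa [hd_sa] using star_mul_self_nonneg d
  calc ‖x - x * p ^ k‖ ^ 2 = ‖x * (d * d) * star x‖ := by
        rw [show x - x * p ^ k = x * d by rw [mul_sub, mul_one], sq,
          ← CStarRing.norm_self_mul_star, star_mul, hd_sa]
        simp only [mul_assoc]
    _ ≤ ‖x * (1 - p ^ m) * star x‖ :=
        norm_le_norm_of_nonneg_of_le (star_right_conjugate_nonneg hdd₀ x)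
          (star_right_conjugate_le_conjugate hdd x)
    _ ≤ ‖x‖ * ‖x - x * p ^ m‖ := by
        rw [mul_sub, mul_one, mul_comm ‖x‖]
        exact (norm_mul_le _ _).trans_eq (by rw [norm_star])

lemma tendsto_mul_pow_of_le {ι : Type*} {l : Filter ι} {p : ι → C}
    (hp : ∀ᶠ i in l, 0 ≤ p i ∧ p i ≤ 1) (x : C) {k m : ℕ} (hkm : k ≤ m)
    (h : Tendsto (fun i => x * p i ^ m) l (𝓝 x)) : Tendsto (fun i => x * p i ^ k) l (𝓝 x) := by
  rw [tendsto_iff_norm_sub_tendsto_zero] at h ⊢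
  have hbound : Tendsto (fun i => √(‖x‖ * ‖x * p i ^ m - x‖)) l (𝓝 0) := by
    simpa using ((h.const_mul ‖x‖).sqrt)
  refine squeeze_zero' (Eventually.of_forall fun _ => norm_nonneg _) ?_ hbound
  filter_upwards [hp] with i ⟨hp₀, hp₁⟩
  rw [Real.le_sqrt (norm_nonneg _) (by positivity), norm_sub_rev, norm_sub_rev _ x]
  exact norm_sub_mul_pow_sq_le hp₀ hp₁ x hkm

end Unital

variable {A : Type*} [NonUnitalCStarAlgebra A] [PartialOrder A] [StarOrderedRing A]

lemma exists_nonneg_nuProd_replicate_eq {a : A} (ha : 0 ≤ a) (m : ℕ) :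
    ∃ b, 0 ≤ b ∧ nuProd b (List.replicate m b) = a := by
  set r : ℝ≥0 := ((m + 1 : ℕ) : ℝ≥0)⁻¹
  have hr : 0 < r := by positivity
  have hpow (k : ℕ) : nuProd (a ^ r) (List.replicate k (a ^ r)) = a ^ ((k + 1 : ℕ) * r) := by
    induction k with
    | zero => simp [nuProd]
    | succ k ih =>
      rw [nuProd_replicate_succ, ih, ← CFC.nnrpow_add (by positivity) hr]
      push_cast
      ring_nf
  refine ⟨a ^ r, CFC.nnrpow_nonneg, ?_⟩
  rw [hpow, mul_inv_cancel₀ (by positivity), CFC.nnrpow_one a]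

end CStarAlgebra

lemma Filter.IsIncreasingApproximateUnit.tendsto_nuProd_replicate {A : Type*}
    [NonUnitalCStarAlgebra A] [PartialOrder A] [StarOrderedRing A] {l : Filter A}
    (hl : l.IsIncreasingApproximateUnit) (a : A) (m : ℕ) :
    Tendsto (fun e => nuProd a (List.replicate m e)) l (𝓝 a) := by
  induction m with
  | zero => exact tendsto_const_nhds
  | succ m ih =>
    have hsmall : Tendsto (fun e => (nuProd a (List.replicate m e) - a) * e) l (𝓝 0) := by
      refine squeeze_zero_norm' ?_ (by simpa using (tendsto_sub_nhds_zero_iff.2 ih).norm)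
      filter_upwards [hl.eventually_norm] with e he
      exact (norm_mul_le _ _).trans (mul_le_of_le_one_right (norm_nonneg _) he)
    refine (zero_add a ▸ hsmall.add (hl.tendsto_mul_left a)).congr fun e => ?_
    rw [nuProd_replicate_succ, sub_mul, sub_add_cancel]

namespace NHom

variable {A B : Type*} [NonUnitalCStarAlgebra A] [NonUnitalCStarAlgebra B] {n : ℕ}
  {φ : A →ₗ[ℂ] B}
  (hmul : ∀ (x : A) (f : Fin (n - 1) → A),
    φ (nuProd x (List.ofFn f)) = nuProd (φ x) (List.ofFn fun i => φ (f i)))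
include hmul

lemma inr_map_nuProd (x : A) {l : List A} (hl : l.length = n - 1) :
    ((φ (nuProd x l) : B) : Unitization ℂ B) =
      φ x * (l.map fun y => (φ y : Unitization ℂ B)).prod := by
  rw [map_nuProd_of_length_eq hmul x hl, Unitization.inr_nuProd, List.map_map]
  rfl

lemma inr_map_nuProd_replicate (x y : A) (k : ℕ) :
    ((φ (nuProd x (List.replicate (k * (n - 1)) y)) : B) : Unitization ℂ B) =
      φ x * (φ y : Unitization ℂ B) ^ (k * (n - 1)) := by
  induction k with
  | zero => simp [nuProd]
  | succ k ih =>
    rw [add_one_mul, List.replicate_add, nuProd_append, inr_map_nuProd hmul _ (by simp), ih,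
      List.map_replicate, List.prod_replicate, pow_add, mul_assoc]

variable [PartialOrder B] [StarOrderedRing B]

lemma norm_map_le_one (hn : 2 ≤ n) {C : ℝ≥0} (hC : ∀ a, ‖φ a‖ ≤ C * ‖a‖) {e : A}
    (he₀ : 0 ≤ φ e) (he₁ : ‖e‖ ≤ 1) : ‖φ e‖ ≤ 1 := by
  by_contra! h
  have hpow (k : ℕ) : ‖φ e‖ ^ k ≤ C := by
    have hk : k ≤ k * (n - 1) + 1 := Nat.le_succ_of_le (Nat.le_mul_of_pos_right k (by omega))
    calc ‖φ e‖ ^ k ≤ ‖φ e‖ ^ (k * (n - 1) + 1) := pow_le_pow_right₀ h.le hk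
      _ = ‖((φ e : B) : Unitization ℂ B) ^ (k * (n - 1) + 1)‖ := by
        rw [CStarAlgebra.norm_pow_of_nonneg (Unitization.inr_nonneg_iff.2 he₀) (by omega),
          Unitization.norm_inr]
      _ = ‖φ (nuProd e (List.replicate (k * (n - 1)) e))‖ := by
        rw [pow_succ', ← inr_map_nuProd_replicate hmul, Unitization.norm_inr]
      _ ≤ C * (‖e‖ * ‖e‖ ^ (k * (n - 1))) :=
        (hC _).trans (by gcongr; exact norm_nuProd_replicate_le e e _)
      _ ≤ C := mul_le_of_le_one_right C.2
        (mul_le_one₀ he₁ (by positivity) (pow_le_one₀ (norm_nonneg e) he₁))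
  obtain ⟨k, hk⟩ := pow_unbounded_of_one_lt (C : ℝ) h
  exact (hpow k).not_gt hk

variable [PartialOrder A] [StarOrderedRing A]

lemma map_nonneg_of_even (hn : n ≠ 0) (heven : Even n)
    (hstar : ∀ a : A, φ (star a) = star (φ a)) {a : A} (ha : 0 ≤ a) : 0 ≤ φ a := by
  obtain ⟨b, hb, rfl⟩ := CStarAlgebra.exists_nonneg_nuProd_replicate_eq ha (n - 1)
  obtain ⟨m, rfl⟩ := heven
  have hφb : IsSelfAdjoint ((φ b : B) : Unitization ℂ B) := by
    rw [Unitization.isSelfAdjoint_inr, IsSelfAdjoint, ← hstar,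
      (IsSelfAdjoint.of_nonneg hb).star_eq]
  rw [← Unitization.inr_nonneg_iff, ← one_mul (m + m - 1), inr_map_nuProd_replicate hmul,
    one_mul, ← pow_succ', Nat.sub_add_cancel (by omega), pow_add]
  nth_rw 1 [← (hφb.pow m).star_eq]
  exact star_mul_self_nonneg _

lemma map_mul_of_contractive (hn : 2 ≤ n) (hpos : ∀ a : A, 0 ≤ a → 0 ≤ φ a)
    (hcont : Continuous φ) (hcontr : ∀ e : A, 0 ≤ e → ‖e‖ ≤ 1 → ‖φ e‖ ≤ 1) (a b : A) :
    φ (a * b) = φ a * φ b := by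
  let ι : B → Unitization ℂ B := (↑)
  let l := CStarAlgebra.approximateUnit A
  have hl : l.IsIncreasingApproximateUnit := CStarAlgebra.increasingApproximateUnit A
  have : l.NeBot := hl.neBot
  have hιφ : Continuous (ι ∘ φ) := Unitization.isometry_inr.continuous.comp hcont
  have hlim₁ : Tendsto (fun e => ι (φ a) * ι (φ e) ^ (n - 1)) l (𝓝 (ι (φ a))) := by
    refine ((hιφ.tendsto a).comp (hl.tendsto_nuProd_replicate a (1 * (n - 1)))).congr
      fun e => ?_
    simp only [Function.comp_apply, ι]
    rw [inr_map_nuProd_replicate hmul, one_mul]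
  have hlim₂ :
      Tendsto (fun e => ι (φ a) * ι (φ e) ^ (n - 2) * ι (φ b)) l (𝓝 (ι (φ (a * b)))) := by
    refine ((hιφ.tendsto (a * b)).comp
      ((hl.tendsto_nuProd_replicate a (n - 2)).mul_const b)).congr fun e => ?_
    have hlen : (List.replicate (n - 2) e ++ [b]).length = n - 1 := by simp; omega
    simp only [Function.comp_apply, ι]
    rw [← nuProd_concat, inr_map_nuProd hmul a hlen]
    simp [mul_assoc]
  have hP : ∀ᶠ e in l, 0 ≤ ι (φ e) ∧ ι (φ e) ≤ 1 := by
    filter_upwards [hl.eventually_nonneg, hl.eventually_norm] with e he₀ he₁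
    have hφe : 0 ≤ ι (φ e) := Unitization.inr_nonneg_iff.2 (hpos e he₀)
    refine ⟨hφe, (CStarAlgebra.norm_le_one_iff_of_nonneg _ hφe).1 ?_⟩
    rw [Unitization.norm_inr]
    exact hcontr e he₀ he₁
  have hlim₃ : Tendsto (fun e => ι (φ a) * ι (φ e) ^ (n - 2)) l (𝓝 (ι (φ a))) :=
    CStarAlgebra.tendsto_mul_pow_of_le hP (ι (φ a)) (Nat.sub_le_sub_left one_le_two n) hlim₁
  exact Unitization.inr_injective (R := ℂ) <|
    (tendsto_nhds_unique hlim₂ (hlim₃.mul_const _)).trans (Unitization.inr_mul ℂ _ _).symm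

end NHom

/-- An involutive `n`-homomorphism between (possibly nonunital) C*-algebras with
`n ≥ 2` even is a `*`-homomorphism. -/
theorem even_nhom_is_starhom {A B : Type*}
    [NonUnitalNormedRing A] [StarRing A] [CStarRing A] [CompleteSpace A]
    [NormedSpace ℂ A] [IsScalarTower ℂ A A] [SMulCommClass ℂ A A] [StarModule ℂ A]
    [NonUnitalNormedRing B] [StarRing B] [CStarRing B] [CompleteSpace B]
    [NormedSpace ℂ B] [IsScalarTower ℂ B B] [SMulCommClass ℂ B B] [StarModule ℂ B]
    (n : ℕ) (hn : 2 ≤ n) (heven : Even n) (φ : A →ₗ[ℂ] B)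
    (hmul : ∀ (x : A) (f : Fin (n - 1) → A),
      φ (nuProd x (List.ofFn f)) = nuProd (φ x) (List.ofFn fun i => φ (f i)))
    (hstar : ∀ a : A, φ (star a) = star (φ a)) :
    ∀ a b : A, φ (a * b) = φ a * φ b := by
  let : NonUnitalCStarAlgebra A := {}
  let : NonUnitalCStarAlgebra B := {}
  let := CStarAlgebra.spectralOrder A
  have := CStarAlgebra.spectralOrderedRing A
  let := CStarAlgebra.spectralOrder B
  have := CStarAlgebra.spectralOrderedRing B
  have hpos (a : A) (ha : 0 ≤ a) : 0 ≤ φ a := NHom.map_nonneg_of_even hmul (by omega) heven hstar ha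
  obtain ⟨C, hC⟩ := (PositiveLinearMap.mk₀ φ hpos).exists_norm_apply_le
  exact NHom.map_mul_of_contractive hmul hn hpos (AddMonoidHomClass.continuous_of_bound φ C hC)
    fun e he₀ he₁ => NHom.norm_map_le_one hmul hn hC (hpos e he₀) he₁
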